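/- Let f_W(x) be a k-layer neural network with 1-Lipschitz activation φ, φ(0)=0, ‖W_i‖ ≤ B_i, ‖x‖ ≤ C with B_i, C ≥ 1, and let ℓ(·, y) : ℝ^c → ℝ be 1-Lipschitz for every label y. Then the training loss W ↦ ℓ(f_W(x), y) is L-Lipschitz in the parameters with L ≤ Δ_{k,1}·C. If additionally φ and ℓ(·, y) are 1-smooth, the training loss is β-smooth with β ≤ (3k+1)·Δ_{k,1}²·C². -/

import Mathlib

open Finset

/-- The `ℓ₂` (spectral) operator norm of a matrix. -/
noncomputable def sNorm {n m : ℕ} (M : Matrix (Fin n) (Fin m) ℝ) : ℝ :=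
  ‖LinearMap.toContinuousLinearMap (Matrix.toEuclideanLin M)‖

/-- A `k`-layer neural network `f_W(x) = W_k φ(W_{k-1} φ(⋯ φ(W_1 x)))` with layer
dimensions `d 0, d 1, …, d k` and weight matrices `W i : ℝ^{d(i+1) × d(i)}`
(so `W 0, …, W (k-1)` are the weights `W_1, …, W_k` of the paper). -/
noncomputable def net (φ : ℝ → ℝ) (d : ℕ → ℕ)
    (W : (i : ℕ) → Matrix (Fin (d (i+1))) (Fin (d i)) ℝ) :
    (k : ℕ) → EuclideanSpace ℝ (Fin (d 0)) → EuclideanSpace ℝ (Fin (d k))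
  | 0 => fun x => x
  | 1 => fun x => Matrix.toEuclideanLin (W 0) x
  | (k+2) => fun x =>
      Matrix.toEuclideanLin (W (k+1)) ((WithLp.equiv 2 _).symm fun j => φ (net φ d W (k+1) x j))

/-- The concatenated parameter vector of the first `k` weight matrices, with the
Euclidean (ℓ₂) norm on the concatenation of all entries. -/
abbrev Params (d : ℕ → ℕ) (k : ℕ) : Type :=
  PiLp 2 (fun i : Fin k => EuclideanSpace ℝ (Fin (d (i.1 + 1)) × Fin (d i.1)))

/-- The weight matrices encoded by a parameter vector (`0` beyond layer `k`). -/
noncomputable def pW (d : ℕ → ℕ) (k : ℕ) (p : Params d k) :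
    (i : ℕ) → Matrix (Fin (d (i+1))) (Fin (d i)) ℝ :=
  fun i => if h : i < k then Matrix.of (fun a b => p ⟨i, h⟩ (a, b)) else 0

/-- The `k`-layer network as a function of its concatenated parameter vector. -/
noncomputable def netP (φ : ℝ → ℝ) (d : ℕ → ℕ) (k : ℕ) (p : Params d k) :
    EuclideanSpace ℝ (Fin (d 0)) → EuclideanSpace ℝ (Fin (d k)) :=
  net φ d (pW d k p) k

/-! A layer of the network, as a function of the parameters, has the form
`r ↦ M r (σ (A r))`: `M` is the linear map (of norm `≤ 1`) sending the parameter vector to the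
layer's weight operator, `σ` the coordinatewise activation and `A` the previous layer. The
value, the Lipschitz constant in the parameters, the derivative and the Lipschitz constant of
the derivative of such a layer are controlled by those of `A`. On the parameter set
`‖W_i‖ ≤ B_i` this gives the recursions `N_{j+1} = B_j N_j` for values,
`L_{j+1} = N_j + B_j L_j` for Lipschitz constants (solved by `L_j = Δ_{j,1} C`), and
`S_{j+1} = 2 L_j + B_j (L_j² + S_j) ≤ 3 (j+1) Δ_{j+1,1}² C²` for smoothness constants.
Composing with the loss adds `L_k² + S_k`. -/

namespace ContinuousLinearMap

variable {P E F G : Type*} [NormedAddCommGroup P] [NormedSpace ℝ P] [NormedAddCommGroup E]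
  [NormedSpace ℝ E] [NormedAddCommGroup F] [NormedSpace ℝ F] [NormedAddCommGroup G]
  [NormedSpace ℝ G]

theorem norm_comp_sub_comp_le (f f' : F →L[ℝ] G) (g g' : E →L[ℝ] F) :
    ‖f.comp g - f'.comp g'‖ ≤ ‖f - f'‖ * ‖g‖ + ‖f'‖ * ‖g - g'‖ := by
  have : f.comp g - f'.comp g' = (f - f').comp g + f'.comp (g - g') := by
    simp only [sub_comp, comp_sub]
    abel
  rw [this]
  exact (norm_add_le _ _).trans (add_le_add (opNorm_comp_le _ _) (opNorm_comp_le _ _))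

variable {M : P →L[ℝ] E →L[ℝ] F} {p q : P} {b : ℝ}

theorem norm_apply_le_of_norm_le_one (hM : ‖M‖ ≤ 1) (p : P) : ‖M p‖ ≤ ‖p‖ :=
  (le_opNorm _ _).trans (mul_le_of_le_one_left (norm_nonneg _) hM)

theorem norm_flip_apply_le_of_norm_le_one (hM : ‖M‖ ≤ 1) (u : E) : ‖M.flip u‖ ≤ ‖u‖ :=
  norm_apply_le_of_norm_le_one (M := M.flip) (by rwa [opNorm_flip]) u

theorem norm_apply_sub_apply_le (hM : ‖M‖ ≤ 1) (hq : ‖M q‖ ≤ b) (u v : E) :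
    ‖M p u - M q v‖ ≤ ‖p - q‖ * ‖u‖ + b * ‖u - v‖ := by
  have : M p u - M q v = M (p - q) u + M q (u - v) := by
    simp only [map_sub, sub_apply]
    abel
  rw [this]
  refine (norm_add_le _ _).trans (add_le_add ?_ ?_)
  · exact (le_opNorm _ _).trans
      (mul_le_mul_of_nonneg_right (norm_apply_le_of_norm_le_one hM _) (norm_nonneg _))
  · exact (le_opNorm _ _).trans (mul_le_mul_of_nonneg_right hq (norm_nonneg _))

theorem norm_comp_add_flip_le (hM : ‖M‖ ≤ 1) (hp : ‖M p‖ ≤ b) (g : P →L[ℝ] E) (u : E) :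
    ‖(M p).comp g + M.flip u‖ ≤ b * ‖g‖ + ‖u‖ :=
  (norm_add_le _ _).trans <| add_le_add
    ((opNorm_comp_le _ _).trans (mul_le_mul_of_nonneg_right hp (norm_nonneg _)))
    (norm_flip_apply_le_of_norm_le_one hM u)

theorem norm_comp_add_flip_sub_le (hM : ‖M‖ ≤ 1) (hq : ‖M q‖ ≤ b) (g g' : P →L[ℝ] E)
    (u u' : E) :
    ‖((M p).comp g + M.flip u) - ((M q).comp g' + M.flip u')‖
      ≤ ‖p - q‖ * ‖g‖ + b * ‖g - g'‖ + ‖u - u'‖ := by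
  have : ((M p).comp g + M.flip u) - ((M q).comp g' + M.flip u')
      = ((M p).comp g - (M q).comp g') + M.flip (u - u') := by
    rw [map_sub]
    abel
  rw [this]
  refine (norm_add_le _ _).trans (add_le_add ((norm_comp_sub_comp_le _ _ _ _).trans ?_)
    (norm_flip_apply_le_of_norm_le_one hM _))
  rw [← map_sub]
  exact add_le_add
    (mul_le_mul_of_nonneg_right (norm_apply_le_of_norm_le_one hM _) (norm_nonneg _))
    (mul_le_mul_of_nonneg_right hq (norm_nonneg _))

end ContinuousLinearMap

theorem norm_gradient_sub_gradient {F : Type*} [NormedAddCommGroup F] [InnerProductSpace ℝ F]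
    [CompleteSpace F] (f : F → ℝ) (x y : F) :
    ‖gradient f x - gradient f y‖ = ‖fderiv ℝ f x - fderiv ℝ f y‖ := by
  rw [gradient, gradient, ← map_sub, LinearIsometryEquiv.norm_map]

theorem norm_fderiv_comp_sub_fderiv_comp_le {P E F : Type*} [NormedAddCommGroup P]
    [NormedSpace ℝ P] [NormedAddCommGroup E] [NormedSpace ℝ E] [NormedAddCommGroup F]
    [NormedSpace ℝ F] {g : E → F} {A : P → E} (hg : Differentiable ℝ g)
    (hA : Differentiable ℝ A) (p q : P) :
    ‖fderiv ℝ (g ∘ A) p - fderiv ℝ (g ∘ A) q‖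
      ≤ ‖fderiv ℝ g (A p) - fderiv ℝ g (A q)‖ * ‖fderiv ℝ A p‖
        + ‖fderiv ℝ g (A q)‖ * ‖fderiv ℝ A p - fderiv ℝ A q‖ := by
  rw [fderiv_comp p (hg _) (hA p), fderiv_comp q (hg _) (hA q)]
  exact ContinuousLinearMap.norm_comp_sub_comp_le _ _ _ _

noncomputable def coordwise {ι : Type*} (ψ : ℝ → ℝ) (u : EuclideanSpace ℝ ι) : EuclideanSpace ℝ ι :=
  (WithLp.equiv 2 _).symm fun i => ψ (u i)

section Coordwise

variable {ι : Type*} {ψ : ℝ → ℝ}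

theorem coordwise_zero (hψ0 : ψ 0 = 0) : coordwise ψ (0 : EuclideanSpace ℝ ι) = 0 := by
  ext i
  simp [coordwise, hψ0]

variable [Fintype ι]

theorem EuclideanSpace.norm_le_mul_norm_of_forall {w v : EuclideanSpace ℝ ι} {a : ℝ}
    (ha : 0 ≤ a) (h : ∀ i, |w i| ≤ a * |v i|) : ‖w‖ ≤ a * ‖v‖ := by
  refine le_of_sq_le_sq ?_ (by positivity)
  rw [mul_pow, EuclideanSpace.norm_sq_eq, EuclideanSpace.norm_sq_eq, mul_sum]
  refine sum_le_sum fun i _ => ?_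
  simpa only [Real.norm_eq_abs, sq_abs, mul_pow] using
    pow_le_pow_left₀ (abs_nonneg _) (h i) 2

theorem lipschitzWith_coordwise {K : NNReal} (hψ : LipschitzWith K ψ) :
    LipschitzWith K (coordwise ψ : EuclideanSpace ℝ ι → EuclideanSpace ℝ ι) := by
  refine LipschitzWith.of_dist_le_mul fun u v => ?_
  simp only [dist_eq_norm]
  refine EuclideanSpace.norm_le_mul_norm_of_forall K.2 fun i => ?_
  simpa [coordwise, Real.dist_eq] using hψ.dist_le_mul (u i) (v i)

theorem hasFDerivAt_coordwise [DecidableEq ι] (hψ : Differentiable ℝ ψ) (u : EuclideanSpace ℝ ι) :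
    HasFDerivAt (coordwise ψ)
      (Matrix.toEuclideanCLM (𝕜 := ℝ) (Matrix.diagonal fun i => deriv ψ (u i))) u := by
  rw [← hasFDerivWithinAt_univ, hasFDerivWithinAt_euclidean]
  intro i
  have : PiLp.proj 2 (fun _ => ℝ) i ∘L
      Matrix.toEuclideanCLM (𝕜 := ℝ) (Matrix.diagonal fun i => deriv ψ (u i))
      = deriv ψ (u i) • PiLp.proj 2 (fun _ => ℝ) i := by
    ext v
    simp [Matrix.mulVec_diagonal]
  rw [this, hasFDerivWithinAt_univ]
  exact (hψ (u i)).hasDerivAt.comp_hasFDerivAt u (PiLp.hasFDerivAt_apply _ u i)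

theorem differentiable_coordwise (hψ : Differentiable ℝ ψ) :
    Differentiable ℝ (coordwise ψ : EuclideanSpace ℝ ι → EuclideanSpace ℝ ι) := by
  classical
  exact fun u => (hasFDerivAt_coordwise hψ u).differentiableAt

open scoped Matrix.Norms.L2Operator in
theorem lipschitzWith_fderiv_coordwise {K : NNReal} (hψ : Differentiable ℝ ψ)
    (hψ' : LipschitzWith K (deriv ψ)) :
    LipschitzWith K (fderiv ℝ (coordwise ψ : EuclideanSpace ℝ ι → EuclideanSpace ℝ ι)) := by
  classical
  refine LipschitzWith.of_dist_le_mul fun u v => ?_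
  rw [(hasFDerivAt_coordwise hψ u).fderiv, (hasFDerivAt_coordwise hψ v).fderiv, dist_eq_norm,
    ← map_sub, Matrix.diagonal_sub, Matrix.l2_opNorm_toEuclideanCLM, Matrix.l2_opNorm_diagonal]
  refine (pi_norm_le_iff_of_nonneg (by positivity)).2 fun i => ?_
  calc ‖deriv ψ (u i) - deriv ψ (v i)‖ ≤ K * ‖u i - v i‖ := by
        simpa only [dist_eq_norm] using hψ'.dist_le_mul (u i) (v i)
    _ ≤ K * dist u v := by
        rw [dist_eq_norm, ← PiLp.sub_apply]
        exact mul_le_mul_of_nonneg_left (PiLp.norm_apply_le _ i) K.2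

end Coordwise

section LayerStep

open ContinuousLinearMap

variable {P E F : Type*} [NormedAddCommGroup P] [NormedSpace ℝ P] [NormedAddCommGroup E]
  [NormedSpace ℝ E] [NormedAddCommGroup F] [NormedSpace ℝ F]
  {M : P →L[ℝ] E →L[ℝ] F} {K : Set P} {σ : E → E} {A : P → E} {b N L S : ℝ}

theorem layer_value_step (hM : ‖M‖ ≤ 1) (hMK : ∀ r ∈ K, ‖M r‖ ≤ b)
    (hσ : LipschitzWith 1 σ) (hσ0 : σ 0 = 0) (hAN : ∀ r ∈ K, ‖A r‖ ≤ N)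
    (hAL : ∀ p ∈ K, ∀ q ∈ K, ‖A p - A q‖ ≤ L * ‖p - q‖) :
    (∀ r ∈ K, ‖M r (σ (A r))‖ ≤ b * N)
      ∧ ∀ p ∈ K, ∀ q ∈ K, ‖M p (σ (A p)) - M q (σ (A q))‖ ≤ (N + b * L) * ‖p - q‖ := by
  have hσN : ∀ r ∈ K, ‖σ (A r)‖ ≤ N := fun r hr =>
    (hσ.norm_le_mul hσ0 _).trans (by simpa using hAN r hr)
  refine ⟨fun r hr => ?_, fun p hp q hq => ?_⟩
  · exact (le_opNorm _ _).trans
      (mul_le_mul (hMK r hr) (hσN r hr) (norm_nonneg _) ((norm_nonneg _).trans (hMK r hr)))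
  · have hb : 0 ≤ b := (norm_nonneg _).trans (hMK q hq)
    have hσL : ‖σ (A p) - σ (A q)‖ ≤ L * ‖p - q‖ := by
      simpa using hσ.norm_sub_le_of_le (hAL p hp q hq)
    calc ‖M p (σ (A p)) - M q (σ (A q))‖
        ≤ ‖p - q‖ * ‖σ (A p)‖ + b * ‖σ (A p) - σ (A q)‖ :=
          norm_apply_sub_apply_le hM (hMK q hq) _ _
      _ ≤ ‖p - q‖ * N + b * (L * ‖p - q‖) := by gcongr; exact hσN p hp
      _ = (N + b * L) * ‖p - q‖ := by ring

theorem layer_fderiv_step (hM : ‖M‖ ≤ 1) (hMK : ∀ r ∈ K, ‖M r‖ ≤ b)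
    (hσ : LipschitzWith 1 σ) (hσ0 : σ 0 = 0) (hσd : Differentiable ℝ σ)
    (hσ' : LipschitzWith 1 (fderiv ℝ σ)) (hA : Differentiable ℝ A) (hAN : ∀ r ∈ K, ‖A r‖ ≤ N)
    (hAL : ∀ p ∈ K, ∀ q ∈ K, ‖A p - A q‖ ≤ L * ‖p - q‖) (hA'L : ∀ r ∈ K, ‖fderiv ℝ A r‖ ≤ L)
    (hA'S : ∀ p ∈ K, ∀ q ∈ K, ‖fderiv ℝ A p - fderiv ℝ A q‖ ≤ S * ‖p - q‖) :
    Differentiable ℝ (fun r => M r (σ (A r)))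
      ∧ (∀ r ∈ K, ‖fderiv ℝ (fun r => M r (σ (A r))) r‖ ≤ b * L + N)
      ∧ ∀ p ∈ K, ∀ q ∈ K, ‖fderiv ℝ (fun r => M r (σ (A r))) p
          - fderiv ℝ (fun r => M r (σ (A r))) q‖ ≤ (2 * L + b * (L ^ 2 + S)) * ‖p - q‖ := by
  set g : P → P →L[ℝ] E := fun r => (fderiv ℝ σ (A r)).comp (fderiv ℝ A r)
  have hF : ∀ r, HasFDerivAt (fun r => M r (σ (A r))) ((M r).comp (g r) + M.flip (σ (A r))) r :=
    fun r => M.hasFDerivAt.clm_apply ((hσd (A r)).hasFDerivAt.comp r (hA r).hasFDerivAt)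
  have hσ'1 : ∀ u, ‖fderiv ℝ σ u‖ ≤ 1 := fun u => by
    simpa using norm_fderiv_le_of_lipschitz ℝ hσ (x₀ := u)
  have hg : ∀ r ∈ K, ‖g r‖ ≤ L := fun r hr => (opNorm_comp_le _ _).trans <| by
    simpa using mul_le_mul (hσ'1 _) (hA'L r hr) (norm_nonneg _) zero_le_one
  refine ⟨fun r => (hF r).differentiableAt, fun r hr => ?_, fun p hp q hq => ?_⟩
  · rw [(hF r).fderiv]
    refine (norm_comp_add_flip_le hM (hMK r hr) _ _).trans (add_le_add ?_ ?_)
    · exact mul_le_mul_of_nonneg_left (hg r hr) ((norm_nonneg _).trans (hMK r hr))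
    · exact (hσ.norm_le_mul hσ0 _).trans (by simpa using hAN r hr)
  · rw [(hF p).fderiv, (hF q).fderiv]
    have hb : 0 ≤ b := (norm_nonneg _).trans (hMK q hq)
    have hL : 0 ≤ L := (norm_nonneg _).trans (hA'L p hp)
    have hgg : ‖g p - g q‖ ≤ (L ^ 2 + S) * ‖p - q‖ := by
      refine (norm_comp_sub_comp_le _ _ _ _).trans ?_
      calc _ ≤ (L * ‖p - q‖) * L + 1 * (S * ‖p - q‖) := by
            refine add_le_add (mul_le_mul ?_ (hA'L p hp) (norm_nonneg _) (by positivity))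
              (mul_le_mul (hσ'1 _) (hA'S p hp q hq) (norm_nonneg _) zero_le_one)
            simpa using hσ'.norm_sub_le_of_le (hAL p hp q hq)
        _ = (L ^ 2 + S) * ‖p - q‖ := by ring
    calc _ ≤ ‖p - q‖ * ‖g p‖ + b * ‖g p - g q‖ + ‖σ (A p) - σ (A q)‖ :=
          norm_comp_add_flip_sub_le hM (hMK q hq) _ _ _ _
      _ ≤ ‖p - q‖ * L + b * ((L ^ 2 + S) * ‖p - q‖) + L * ‖p - q‖ := by
          gcongr
          · exact hg p hp
          · simpa using hσ.norm_sub_le_of_le (hAL p hp q hq)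
      _ = (2 * L + b * (L ^ 2 + S)) * ‖p - q‖ := by ring

end LayerStep

/-- The paper's `Δ_{j,1}` for the first `j` layers. -/
def sumProdErase {R : Type*} [CommSemiring R] (B : ℕ → R) (j : ℕ) : R :=
  ∑ i ∈ range j, ∏ l ∈ (range j).erase i, B l

theorem sumProdErase_succ {R : Type*} [CommSemiring R] (B : ℕ → R) (j : ℕ) :
    sumProdErase B (j + 1) = B j * sumProdErase B j + ∏ i ∈ range j, B i := by
  have hj : (range (j + 1)).erase j = range j := by
    rw [range_add_one, erase_insert notMem_range_self]
  have hi : ∀ i ∈ range j, ∏ l ∈ (range (j + 1)).erase i, B l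
      = B j * ∏ l ∈ (range j).erase i, B l := fun i hi => by
    rw [range_add_one, erase_insert_of_ne (ne_of_mem_of_not_mem hi notMem_range_self).symm,
      prod_insert (by simp)]
  rw [sumProdErase, sum_range_succ, hj, sum_congr rfl hi, ← mul_sum, sumProdErase]

theorem smooth_const_succ_le {B : ℕ → ℝ} (hB : ∀ i, 1 ≤ B i) {C : ℝ} (hC : 1 ≤ C) (j : ℕ) :
    2 * (sumProdErase B j * C)
        + B j * ((sumProdErase B j * C) ^ 2 + 3 * j * sumProdErase B j ^ 2 * C ^ 2)
      ≤ 3 * ↑(j + 1) * sumProdErase B (j + 1) ^ 2 * C ^ 2 := by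
  have hprod : 1 ≤ ∏ i ∈ range j, B i := one_le_prod fun i _ => hB i
  have ha : 0 ≤ sumProdErase B j :=
    sum_nonneg fun i _ => prod_nonneg fun l _ => zero_le_one.trans (hB l)
  rw [sumProdErase_succ]
  set a := sumProdErase B j
  set a' := B j * a + ∏ i ∈ range j, B i
  have hBa : a ≤ B j * a := le_mul_of_one_le_left ha (hB j)
  have h1 : a * C ≤ a' ^ 2 * C ^ 2 := by
    have : a ≤ a' ^ 2 := by nlinarith
    exact mul_le_mul this (by nlinarith) (by positivity) (by positivity)
  have h2 : B j * a ^ 2 * C ^ 2 ≤ a' ^ 2 * C ^ 2 := by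
    have : B j * a ^ 2 ≤ a' ^ 2 := by nlinarith
    exact mul_le_mul_of_nonneg_right this (by positivity)
  have h3 := mul_le_mul_of_nonneg_left h2 (by positivity : (0 : ℝ) ≤ 3 * j)
  push_cast
  linarith

theorem sNorm_of_le_norm {n m : ℕ} (v : EuclideanSpace ℝ (Fin n × Fin m)) :
    sNorm (Matrix.of fun a b => v (a, b)) ≤ ‖v‖ := by
  refine ContinuousLinearMap.opNorm_le_bound _ (norm_nonneg _) fun u => ?_
  refine le_of_sq_le_sq ?_ (by positivity)
  simp only [LinearMap.coe_toContinuousLinearMap', mul_pow, EuclideanSpace.norm_sq_eq,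
    Real.norm_eq_abs, sq_abs, Fintype.sum_prod_type]
  rw [sum_mul]
  refine sum_le_sum fun a _ => ?_
  simpa [Matrix.mulVec, dotProduct] using
    sum_mul_sq_le_sq_mul_sq univ (fun b => v (a, b)) (fun b => u b)

theorem sNorm_pW_le (d : ℕ → ℕ) (k : ℕ) (r : Params d k) (j : ℕ) : sNorm (pW d k r j) ≤ ‖r‖ := by
  unfold pW
  split_ifs with hj
  · exact (sNorm_of_le_norm _).trans (PiLp.norm_apply_le r ⟨j, hj⟩)
  · simp [sNorm]

noncomputable def pWLinear (d : ℕ → ℕ) (k j : ℕ) :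
    Params d k →ₗ[ℝ] Matrix (Fin (d (j + 1))) (Fin (d j)) ℝ where
  toFun r := pW d k r j
  map_add' p q := by
    unfold pW
    split_ifs
    · ext; simp
    · simp
  map_smul' c p := by
    unfold pW
    split_ifs
    · ext; simp
    · simp

noncomputable def weightCLM (d : ℕ → ℕ) (k j : ℕ) :
    Params d k →L[ℝ] EuclideanSpace ℝ (Fin (d j)) →L[ℝ] EuclideanSpace ℝ (Fin (d (j + 1))) :=
  LinearMap.mkContinuous
    (LinearMap.toContinuousLinearMap.toLinearMap ∘ₗ Matrix.toEuclideanLin.toLinearMap ∘ₗ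
      pWLinear d k j) 1 fun r => (one_mul ‖r‖).symm ▸ sNorm_pW_le d k r j

theorem norm_weightCLM_le (d : ℕ → ℕ) (k j : ℕ) : ‖weightCLM d k j‖ ≤ 1 :=
  LinearMap.mkContinuous_norm_le _ zero_le_one _

-- The input layer carries no activation, whence `id` at `j = 0`.
theorem net_pW_succ (φ : ℝ → ℝ) (d : ℕ → ℕ) (k j : ℕ) (x : EuclideanSpace ℝ (Fin (d 0)))
    (r : Params d k) :
    net φ d (pW d k r) (j + 1) x
      = weightCLM d k j r (coordwise (if j = 0 then id else φ) (net φ d (pW d k r) j x)) := by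
  cases j <;> rfl

def weightBall (d : ℕ → ℕ) (k : ℕ) (B : ℕ → ℝ) : Set (Params d k) :=
  {r | ∀ i : Fin k, sNorm (pW d k r i) ≤ B i}

section NetBounds

variable {φ : ℝ → ℝ} {d : ℕ → ℕ} {k : ℕ} {B : ℕ → ℝ} {C : ℝ} {x : EuclideanSpace ℝ (Fin (d 0))}

theorem net_norm_le_and_sub_le (hφ : LipschitzWith 1 φ) (hφ0 : φ 0 = 0) (hx : ‖x‖ ≤ C) {j : ℕ}
    (hj : j ≤ k) :
    (∀ r ∈ weightBall d k B, ‖net φ d (pW d k r) j x‖ ≤ (∏ i ∈ range j, B i) * C)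
      ∧ ∀ p ∈ weightBall d k B, ∀ q ∈ weightBall d k B,
        ‖net φ d (pW d k p) j x - net φ d (pW d k q) j x‖ ≤ sumProdErase B j * C * ‖p - q‖ := by
  induction j with
  | zero => simp [net, hx, sumProdErase]
  | succ j ih =>
    obtain ⟨hN, hL⟩ := ih (by omega)
    obtain ⟨h1, h2⟩ := layer_value_step (K := weightBall d k B) (b := B j)
      (σ := coordwise (if j = 0 then id else φ)) (norm_weightCLM_le d k j) (fun r hr => hr ⟨j, hj⟩)
      (lipschitzWith_coordwise (by split_ifs; exacts [LipschitzWith.id, hφ]))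
      (coordwise_zero (by split_ifs; exacts [rfl, hφ0])) hN hL
    simp only [net_pW_succ]
    refine ⟨fun r hr => (h1 r hr).trans_eq ?_, fun p hp q hq => (h2 p hp q hq).trans_eq ?_⟩
    · rw [prod_range_succ]; ring
    · rw [sumProdErase_succ]; ring

theorem net_fderiv_bounds (hφ : LipschitzWith 1 φ) (hφ0 : φ 0 = 0) (hφd : Differentiable ℝ φ)
    (hφ' : LipschitzWith 1 (deriv φ)) (hB : ∀ i, 1 ≤ B i) (hC : 1 ≤ C) (hx : ‖x‖ ≤ C) {j : ℕ}
    (hj : j ≤ k) :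
    Differentiable ℝ (fun r : Params d k => net φ d (pW d k r) j x)
      ∧ (∀ r ∈ weightBall d k B,
          ‖fderiv ℝ (fun r => net φ d (pW d k r) j x) r‖ ≤ sumProdErase B j * C)
      ∧ ∀ p ∈ weightBall d k B, ∀ q ∈ weightBall d k B,
          ‖fderiv ℝ (fun r => net φ d (pW d k r) j x) p
            - fderiv ℝ (fun r => net φ d (pW d k r) j x) q‖
            ≤ 3 * j * sumProdErase B j ^ 2 * C ^ 2 * ‖p - q‖ := by
  induction j with
  | zero => simp [net, sumProdErase]
  | succ j ih =>
    obtain ⟨hA, hA'L, hA'S⟩ := ih (by omega)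
    obtain ⟨hN, hL⟩ := net_norm_le_and_sub_le (k := k) (B := B) hφ hφ0 hx (j := j) (by omega)
    obtain ⟨h1, h2, h3⟩ := layer_fderiv_step (K := weightBall d k B) (b := B j)
      (σ := coordwise (if j = 0 then id else φ)) (norm_weightCLM_le d k j) (fun r hr => hr ⟨j, hj⟩)
      (lipschitzWith_coordwise (by split_ifs; exacts [LipschitzWith.id, hφ]))
      (coordwise_zero (by split_ifs; exacts [rfl, hφ0]))
      (differentiable_coordwise (by split_ifs; exacts [differentiable_id, hφd]))
      (lipschitzWith_fderiv_coordwise (by split_ifs; exacts [differentiable_id, hφd])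
        (by
          split_ifs
          exacts [deriv_id' (𝕜 := ℝ) ▸ (LipschitzWith.const 1).weaken zero_le_one, hφ']))
      hA hN hL hA'L hA'S
    simp only [net_pW_succ]
    refine ⟨h1, fun r hr => (h2 r hr).trans_eq ?_, fun p hp q hq => (h3 p hp q hq).trans ?_⟩
    · rw [sumProdErase_succ]; ring
    · exact mul_le_mul_of_nonneg_right (smooth_const_succ_le hB hC j) (norm_nonneg _)

end NetBounds

/-- For a `k`-layer network with `1`-Lipschitz activation `φ`, `φ 0 = 0`, weight
spectral norms at most `B i ≥ 1`, `‖x‖ ≤ C` with `C ≥ 1`, and a loss `ℓ(·,y)` that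
is `1`-Lipschitz for every label `y`, the training loss `W ↦ ℓ(f_W(x), y)` is
`Δ_{k,1} C`-Lipschitz in the parameters; if moreover `φ` and `ℓ(·,y)` are `1`-smooth
(and differentiable), it is `(3k+1) Δ_{k,1}² C²`-smooth, i.e. its gradient is
`(3k+1) Δ_{k,1}² C²`-Lipschitz.  Here `Δ_{k,1} = ∑_{i=1}^k ∏_{j ≠ i} B_j`. -/
theorem net_loss_lipschitz_and_smooth {Y : Type*} (φ : ℝ → ℝ)
    (hφ : LipschitzWith 1 φ) (hφ0 : φ 0 = 0)
    (d : ℕ → ℕ) (k : ℕ) (B : ℕ → ℝ) (hB : ∀ i, 1 ≤ B i) (C : ℝ) (hC : 1 ≤ C)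
    (x : EuclideanSpace ℝ (Fin (d 0))) (hx : ‖x‖ ≤ C)
    (ℓ : Y → EuclideanSpace ℝ (Fin (d k)) → ℝ)
    (hℓ : ∀ y, LipschitzWith 1 (ℓ y)) (y : Y)
    (p q : Params d k)
    (hp : ∀ i : Fin k, sNorm (pW d k p i.1) ≤ B i.1)
    (hq : ∀ i : Fin k, sNorm (pW d k q i.1) ≤ B i.1) :
    (|ℓ y (netP φ d k p x) - ℓ y (netP φ d k q x)|
        ≤ ((∑ i ∈ range k, ∏ j ∈ (range k).erase i, B j) * C) * ‖p - q‖)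
    ∧ ((Differentiable ℝ φ ∧ LipschitzWith 1 (deriv φ)
          ∧ Differentiable ℝ (ℓ y) ∧ LipschitzWith 1 (gradient (ℓ y))) →
        ‖gradient (fun r : Params d k => ℓ y (netP φ d k r x)) p
            - gradient (fun r : Params d k => ℓ y (netP φ d k r x)) q‖
          ≤ ((3 * k + 1) * (∑ i ∈ range k, ∏ j ∈ (range k).erase i, B j) ^ 2 * C ^ 2)
              * ‖p - q‖) := by
  have hnet := (net_norm_le_and_sub_le (B := B) hφ hφ0 hx le_rfl).2 p hp q hq
  refine ⟨?_, fun ⟨hφd, hφ', hℓd, hℓ'⟩ => ?_⟩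
  · have := (hℓ y).norm_sub_le_of_le hnet
    rwa [NNReal.coe_one, one_mul, Real.norm_eq_abs] at this
  obtain ⟨hA, hA'L, hA'S⟩ := net_fderiv_bounds hφ hφ0 hφd hφ' hB hC hx (k := k) le_rfl
  have hℓ'pq : ‖fderiv ℝ (ℓ y) (netP φ d k p x) - fderiv ℝ (ℓ y) (netP φ d k q x)‖
      ≤ sumProdErase B k * C * ‖p - q‖ := by
    have := hℓ'.norm_sub_le_of_le hnet
    rwa [NNReal.coe_one, one_mul, norm_gradient_sub_gradient] at this
  have hℓ'1 : ‖fderiv ℝ (ℓ y) (netP φ d k q x)‖ ≤ 1 := by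
    simpa using norm_fderiv_le_of_lipschitz ℝ (hℓ y)
  rw [norm_gradient_sub_gradient]
  refine (norm_fderiv_comp_sub_fderiv_comp_le (A := fun r => netP φ d k r x) hℓd hA p q).trans ?_
  calc _ ≤ (sumProdErase B k * C * ‖p - q‖) * (sumProdErase B k * C)
        + 1 * (3 * k * sumProdErase B k ^ 2 * C ^ 2 * ‖p - q‖) := by
        exact add_le_add
          (mul_le_mul hℓ'pq (hA'L p hp) (norm_nonneg _) ((norm_nonneg _).trans hℓ'pq))
          (mul_le_mul hℓ'1 (hA'S p hp q hq) (norm_nonneg _) zero_le_one)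
    _ = _ := by rw [sumProdErase]; ring
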